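/- arXiv:2403.18999 — 7 statements merged into one kernel-verified Lean document; each statement's English description precedes it below -/
import Mathlib

section
/- Footprints of separating conjunctions are unions of footprints of operands: for any model (s,h), FP_{(s,h)}(ψ1 ∗ ψ2) ⊆ {F1 ∪ F2 | F1 ∈ FP_{(s,h)}(ψ1), F2 ∈ FP_{(s,h)}(ψ2)}. -/
/-!
If `h|_F = h₁ ⊎ h₂`, take `Fᵢ = dom hᵢ`: then `F = F₁ ∪ F₂`, and since `Fᵢ ⊆ F`, restricting
`h` to `Fᵢ` is restricting `h|_F = h₁ ⊎ h₂` to `Fᵢ`, which gives back `hᵢ` (for `i = 2` by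
disjointness).
-/

section

variable {Vars Loc : Type*}

/-- Domain of a heap. -/
def hdom (h : Loc → Option Loc) : Set Loc := {l | h l ≠ none}

/-- Disjointness of heaps (disjoint domains). -/
def HDisj (h1 h2 : Loc → Option Loc) : Prop := Disjoint (hdom h1) (hdom h2)

/-- Disjoint union of heaps (left-biased union, used under disjointness). -/
def hunion (h1 h2 : Loc → Option Loc) : Loc → Option Loc :=
  fun l => (h1 l).orElse (fun _ => h2 l)

open Classical in
/-- Restriction of a heap to a set of locations. -/
noncomputable def hrestrict (h : Loc → Option Loc) (F : Set Loc) : Loc → Option Loc :=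
  fun l => if l ∈ F then h l else none

/-- Footprints of a formula `P` (a predicate on heaps, the stack being fixed)
in the model with heap `h`. -/
def FP (P : (Loc → Option Loc) → Prop) (h : Loc → Option Loc) : Set (Set Loc) :=
  {F | F ⊆ hdom h ∧ P (hrestrict h F)}

/-- Semantics of separating conjunction. -/
def SepStar (P1 P2 : (Loc → Option Loc) → Prop) (h : Loc → Option Loc) : Prop :=
  ∃ h1 h2, HDisj h1 h2 ∧ h = hunion h1 h2 ∧ P1 h1 ∧ P2 h2

theorem hdom_hrestrict_of_subset {h : Loc → Option Loc} {F : Set Loc} (hF : F ⊆ hdom h) :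
    hdom (hrestrict h F) = F := by
  ext l
  by_cases hl : l ∈ F
  · simpa [hdom, hrestrict, hl] using hF hl
  · simp [hdom, hrestrict, hl]

theorem hrestrict_hrestrict_of_subset (h : Loc → Option Loc) {F G : Set Loc} (hGF : G ⊆ F) :
    hrestrict (hrestrict h F) G = hrestrict h G := by
  funext l
  by_cases hl : l ∈ G
  · simp [hrestrict, hl, hGF hl]
  · simp [hrestrict, hl]

theorem hdom_hunion (h1 h2 : Loc → Option Loc) : hdom (hunion h1 h2) = hdom h1 ∪ hdom h2 := by
  ext l
  cases h1l : h1 l <;> simp [hdom, hunion, h1l]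

theorem hrestrict_hunion_hdom_left (h1 h2 : Loc → Option Loc) :
    hrestrict (hunion h1 h2) (hdom h1) = h1 := by
  funext l
  cases h1l : h1 l <;> simp [hrestrict, hdom, hunion, h1l]

theorem hrestrict_hunion_hdom_right {h1 h2 : Loc → Option Loc} (hd : HDisj h1 h2) :
    hrestrict (hunion h1 h2) (hdom h2) = h2 := by
  funext l
  by_cases h2l : h2 l = none
  · simp [hrestrict, hdom, h2l]
  · have h1l : h1 l = none := not_not.mp fun h1l => Set.disjoint_left.mp hd h1l h2l
    simp [hrestrict, hdom, hunion, h2l, h1l]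

/-- Footprints of a separating conjunction are unions of footprints of the
operands. -/
theorem stmt6 (P1 P2 : (Loc → Option Loc) → Prop) (h : Loc → Option Loc) :
    FP (SepStar P1 P2) h ⊆
      {F | ∃ F1 ∈ FP P1 h, ∃ F2 ∈ FP P2 h, F = F1 ∪ F2} := by
  rintro F ⟨hFh, h1, h2, hd, hsplit, hP1, hP2⟩
  have hF : F = hdom h1 ∪ hdom h2 := by
    rw [← hdom_hunion, ← hsplit, hdom_hrestrict_of_subset hFh]
  have h1F : hdom h1 ⊆ F := hF ▸ Set.subset_union_left
  have h2F : hdom h2 ⊆ F := hF ▸ Set.subset_union_right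
  refine ⟨hdom h1, ⟨h1F.trans hFh, ?_⟩, hdom h2, ⟨h2F.trans hFh, ?_⟩, hF⟩
  · rwa [← hrestrict_hrestrict_of_subset h h1F, hsplit, hrestrict_hunion_hdom_left]
  · rwa [← hrestrict_hrestrict_of_subset h h2F, hsplit, hrestrict_hunion_hdom_right hd]

end
end

section
/- In a satisfiable model of a singly-linked list segment, the heap domain equals the domain of the unique n-path from the root to the sink: (s,h) ⊨ sls(x,y) if and only if there exists an n-path σ from s(x) to s(y) in the heap graph of (s,h) such that dom(h) = dom(σ). -/
/-!
Both directions are an induction that removes the first cell: splitting `h = {a ↦ l} ⊎ h'` off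
the heap corresponds to taking the path `a :: σ` to its tail `σ`, where `h'` is
`Function.update h a none`. The path is duplicate-free exactly because `a` is neither in
`dom h' = dom σ` nor the sink.
-/

section

variable {Vars Loc : Type*}

/-- Image of a heap. -/
def himg (h : Loc → Option Loc) : Set Loc := {l | ∃ l', h l' = some l}

/-- The singly-linked list segment predicate `sls`, defined inductively:
either the segment is empty (`a = b`, empty heap), or `a ≠ b`, `a` points to
some `l`, and the rest of the heap is a list segment from `l` to `b`. -/
inductive Sls : (Loc → Option Loc) → Loc → Loc → Prop
  | nil (h : Loc → Option Loc) (a : Loc) (he : ∀ l, h l = none) : Sls h a a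
  | cons (h h' : Loc → Option Loc) (a b l : Loc) (hab : a ≠ b)
      (ha : h a = some l) (ha' : h' a = none)
      (hrest : ∀ m, m ≠ a → h m = h' m) (tail : Sls h' l b) : Sls h a b

/-- `σ` is an n-path from `x` to `y` in the heap graph of `h`. -/
def IsPath (h : Loc → Option Loc) (σ : List Loc) (x y : Loc) : Prop :=
  σ.Nodup ∧ σ.head? = some x ∧ σ.getLast? = some y ∧
  ∀ (i : ℕ) v w, σ[i]? = some v → σ[i + 1]? = some w → h v = some w

namespace IsPath

variable {h h' : Loc → Option Loc} {σ : List Loc} {a b : Loc}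

lemma exists_eq_cons (hp : IsPath h σ a b) : ∃ τ, σ = a :: τ := by
  obtain ⟨-, hhead, -⟩ := hp
  cases σ with
  | nil => simp at hhead
  | cons c τ => exact ⟨τ, by simpa using hhead⟩

lemma dropLast_append (hp : IsPath h σ a b) : σ.dropLast ++ [b] = σ :=
  List.dropLast_append_getLast? b hp.2.2.1

lemma congr_heap (hp : IsPath h σ a b) (hh : ∀ v ∈ σ, h v = h' v) : IsPath h' σ a b := by
  obtain ⟨hnd, hhead, hlast, hstep⟩ := hp
  refine ⟨hnd, hhead, hlast, fun i v w hv hw => ?_⟩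
  rw [← hh v (List.mem_of_getElem? hv)]
  exact hstep i v w hv hw

lemma update_of_notMem [DecidableEq Loc] (hp : IsPath h σ a b) {l : Loc} (hl : l ∉ σ)
    (o : Option Loc) : IsPath (Function.update h l o) σ a b :=
  hp.congr_heap fun _ hv => (Function.update_of_ne (ne_of_mem_of_not_mem hv hl) o h).symm

end IsPath

lemma isPath_singleton_iff {h : Loc → Option Loc} {a x y : Loc} :
    IsPath h [a] x y ↔ a = x ∧ a = y := by
  refine ⟨fun ⟨_, hx, hy, _⟩ => by simp_all, ?_⟩
  rintro ⟨rfl, rfl⟩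
  refine ⟨List.nodup_singleton a, rfl, rfl, fun i v w _ hw => ?_⟩
  simp at hw

lemma isPath_cons_cons_iff {h : Loc → Option Loc} {σ : List Loc} {a c b : Loc} :
    IsPath h (a :: c :: σ) a b ↔ a ∉ c :: σ ∧ h a = some c ∧ IsPath h (c :: σ) c b := by
  simp only [IsPath, List.nodup_cons (a := a), List.head?_cons, List.getLast?_cons_cons]
  constructor
  · rintro ⟨⟨ha, hnd⟩, -, hlast, hstep⟩
    exact ⟨ha, hstep 0 a c rfl rfl, hnd, trivial, hlast, fun i => hstep (i + 1)⟩
  · rintro ⟨ha, hac, hnd, -, hlast, hstep⟩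
    refine ⟨⟨ha, hnd⟩, trivial, hlast, fun i v w hv hw => ?_⟩
    cases i with
    | zero => simp_all
    | succ i => exact hstep i v w hv hw

lemma hdom_update_some [DecidableEq Loc] (h : Loc → Option Loc) (a l : Loc) :
    hdom (Function.update h a (some l)) = insert a (hdom h) := by
  ext m
  by_cases hm : m = a <;> simp [hdom, hm]

lemma hdom_update_none [DecidableEq Loc] (h : Loc → Option Loc) (a : Loc) :
    hdom (Function.update h a none) = hdom h \ {a} := by
  ext m
  by_cases hm : m = a <;> simp [hdom, hm]

lemma setOf_mem_dropLast_cons_cons (a c : Loc) (σ : List Loc) :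
    {l | l ∈ (a :: c :: σ).dropLast} = insert a {l | l ∈ (c :: σ).dropLast} := by
  ext; simp

lemma Sls.exists_isPath {h : Loc → Option Loc} {a b : Loc} (H : Sls h a b) :
    ∃ σ : List Loc, IsPath h σ a b ∧ hdom h = {l | l ∈ σ.dropLast} := by
  classical
  induction H with
  | nil h a he =>
    exact ⟨[a], isPath_singleton_iff.2 ⟨rfl, rfl⟩, by ext; simp [hdom, he]⟩
  | cons h h' a b l hab ha ha' hrest _ ih =>
    obtain rfl : h = Function.update h' a (some l) := by
      funext m
      by_cases hm : m = a
      · subst hm; simpa using ha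
      · simpa [hm] using hrest m hm
    obtain ⟨σ, hp, hdom'⟩ := ih
    obtain ⟨τ, rfl⟩ := hp.exists_eq_cons
    have ha_notMem : a ∉ l :: τ := by
      have ha_notDom : a ∉ (l :: τ).dropLast := fun hm => (show a ∈ hdom h' from hdom' ▸ hm) ha'
      rw [← hp.dropLast_append]
      simpa using ⟨ha_notDom, hab⟩
    refine ⟨a :: l :: τ, isPath_cons_cons_iff.2 ⟨ha_notMem, by simp, hp.update_of_notMem ha_notMem _⟩,
      ?_⟩
    rw [hdom_update_some, hdom', setOf_mem_dropLast_cons_cons]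

lemma Sls.of_isPath {b : Loc} (σ : List Loc) :
    ∀ {h : Loc → Option Loc} {a : Loc},
      IsPath h σ a b → hdom h = {l | l ∈ σ.dropLast} → Sls h a b := by
  classical
  induction σ with
  | nil => exact fun hp _ => absurd hp.2.1 (by simp)
  | cons c τ ih =>
    intro h a hp hdom_eq
    obtain rfl : a = c := by simpa using hp.2.1.symm
    cases τ with
    | nil =>
      obtain ⟨-, rfl⟩ := isPath_singleton_iff.1 hp
      refine Sls.nil h a fun l => ?_
      simpa [hdom] using Set.ext_iff.1 hdom_eq l
    | cons d ρ =>
      obtain ⟨ha_notMem, had, hp'⟩ := isPath_cons_cons_iff.1 hp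
      have hab : a ≠ b := by
        rintro rfl
        exact ha_notMem (hp'.dropLast_append ▸ List.mem_append_right _ (List.mem_singleton_self a))
      have hdom' : hdom (Function.update h a none) = {l | l ∈ (d :: ρ).dropLast} := by
        rw [hdom_update_none, hdom_eq, setOf_mem_dropLast_cons_cons]
        exact Set.insert_sdiff_self_of_notMem fun ha => ha_notMem (List.mem_of_mem_dropLast ha)
      exact Sls.cons h _ a b d hab had (by simp) (fun m hm => by simp [hm])
        (ih (hp'.update_of_notMem ha_notMem none) hdom')

/-- A heap satisfies `sls(x,y)` iff there is an n-path from `s x` to `s y`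
whose domain (all vertices but the last) is exactly the heap domain. -/
theorem stmt9 (s : Vars → Loc) (x y : Vars) (h : Loc → Option Loc) :
    Sls h (s x) (s y) ↔
      ∃ σ : List Loc, IsPath h σ (s x) (s y) ∧ hdom h = {l | l ∈ σ.dropLast} :=
  ⟨Sls.exists_isPath, fun ⟨σ, hp, hdom_eq⟩ => Sls.of_isPath σ hp hdom_eq⟩

end
end

section
/- Positive models have no unlabeled dangling locations for list segments: if (s,h) ⊨ sls(x,y), then img(h) \ dom(h) ⊆ img(s), in fact img(h) \ dom(h) ⊆ {s(y)}. -/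
section

variable {Vars Loc : Type*}

/-! Every cell of a list segment points either to the end `b` or to the head of a nonempty
tail segment, and the head of a nonempty segment is allocated; so by induction on the
segment, `b` is the only location that can dangle. -/

theorem Sls.mem_hdom_of_ne {h : Loc → Option Loc} {a b : Loc} (hs : Sls h a b) (hab : a ≠ b) :
    a ∈ hdom h := by
  cases hs with
  | nil => exact absurd rfl hab
  | cons _ _ _ _ _ _ ha => simp [hdom, ha]

theorem Sls.himg_diff_hdom_subset {h : Loc → Option Loc} {a b : Loc} (hs : Sls h a b) :
    himg h \ hdom h ⊆ {b} := by
  induction hs with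
  | nil h a he =>
    rintro c ⟨⟨m, hm⟩, -⟩
    simp [he m] at hm
  | cons h h' a b l _ ha _ hrest tail ih =>
    rintro c ⟨⟨m, hm⟩, hc⟩
    have hc_none : h c = none := by simpa [hdom] using hc
    have hca : c ≠ a := by rintro rfl; simp [ha] at hc_none
    have hc' : c ∉ hdom h' := by simpa [hdom, hrest c hca] using hc_none
    by_cases hma : m = a
    · subst hma
      obtain rfl : l = c := Option.some.inj (ha.symm.trans hm)
      by_contra hcb
      exact hc' (tail.mem_hdom_of_ne hcb)
    · exact ih ⟨⟨m, (hrest m hma) ▸ hm⟩, hc'⟩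

/-- List segments have no unlabeled dangling locations: every dangling location
is `s y`, in particular it is in the image of the stack. -/
theorem stmt12 (s : Vars → Loc) (x y : Vars) (h : Loc → Option Loc)
    (hsls : Sls h (s x) (s y)) :
    himg h \ hdom h ⊆ Set.range s ∧ himg h \ hdom h ⊆ {s y} := by
  have hsub := hsls.himg_diff_hdom_subset
  exact ⟨hsub.trans (Set.singleton_subset_iff.mpr ⟨y, rfl⟩), hsub⟩

end
end

section
/- Acyclicity of list segments: if (s,h) ⊨ sls(x,y) with s(x) ≠ s(y), then s(y) ∉ dom(h), and for every ℓ ∈ dom(h) the iterates ℓ, h(ℓ), h²(ℓ), ... eventually reach s(y) without repeating any location. -/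
section

variable {Vars Loc : Type*}

/-- `k`-fold iterate of the heap partial function (undefined if an
intermediate step is undefined). -/
def pit (h : Loc → Option Loc) : ℕ → Loc → Option Loc
  | 0, x => some x
  | n + 1, x => (h x).bind (pit h n)

/-! Unfolding `Sls h a b` lays the cells out along a simple `h`-path
`a = ℓ₀ ↦ ℓ₁ ↦ ⋯ ↦ ℓₖ = b` whose first `k` points are exactly `dom h`. Since the path does not
repeat, `b` is none of the allocated `ℓᵢ`, and from an allocated `ℓᵢ` the suffix of the path
reaches `b` without repetition. -/

theorem pit_add (h : Loc → Option Loc) (m n : ℕ) (x : Loc) :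
    pit h (m + n) x = (pit h m x).bind (pit h n) := by
  induction m generalizing x with
  | zero => simp [pit]
  | succ m ih =>
    rw [Nat.add_right_comm]
    simp only [pit, Option.bind_assoc, ih]

theorem pit_succ_of_eq_some {h : Loc → Option Loc} {a l : Loc} (ha : h a = some l) (n : ℕ) :
    pit h (n + 1) a = pit h n l := by
  simp [pit, ha]

theorem pit_ne_none_of_le {h : Loc → Option Loc} {x : Loc} {m n : ℕ} (hmn : m ≤ n)
    (hn : pit h n x ≠ none) : pit h m x ≠ none := by
  intro hm
  rw [← Nat.add_sub_cancel' hmn, pit_add, hm, Option.bind_none] at hn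
  exact hn rfl

theorem pit_eq_of_subheap {h h' : Loc → Option Loc} (hle : ∀ c v, h' c = some v → h c = some v)
    {n : ℕ} {x : Loc} (hn : pit h' n x ≠ none) : pit h n x = pit h' n x := by
  induction n generalizing x with
  | zero => rfl
  | succ n ih =>
    obtain ⟨v, hv⟩ := Option.ne_none_iff_exists'.mp fun hx : h' x = none => by simp [pit, hx] at hn
    rw [pit_succ_of_eq_some hv] at hn ⊢
    rw [pit_succ_of_eq_some (hle x v hv), ih hn]

theorem mem_hdom_iff_eq_or_mem_hdom {h h' : Loc → Option Loc} {a l c : Loc}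
    (ha : h a = some l) (hrest : ∀ m, m ≠ a → h m = h' m) :
    c ∈ hdom h ↔ c = a ∨ c ∈ hdom h' := by
  rcases eq_or_ne c a with rfl | hca
  · simp [hdom, ha]
  · simp [hdom, hca, hrest c hca]

theorem Sls.exists_pit_injOn {h : Loc → Option Loc} {a b : Loc} (hs : Sls h a b) :
    ∃ k, pit h k a = some b ∧ Set.InjOn (pit h · a) (Set.Iic k) ∧
      ∀ c, c ∈ hdom h ↔ ∃ i < k, pit h i a = some c := by
  induction hs with
  | nil h a he =>
    refine ⟨0, rfl, fun i hi j hj _ => ?_, by simp [hdom, he]⟩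
    exact (Nat.le_zero.mp hi).trans (Nat.le_zero.mp hj).symm
  | cons h h' a b l hab ha ha' hrest _ ih =>
    obtain ⟨k, hk, hinj, hdom'⟩ := ih
    have hle : ∀ c v, h' c = some v → h c = some v := fun c v hv => by
      rw [hrest c fun hca => by simp [hca, ha'] at hv]; exact hv
    have hshift : ∀ i ≤ k, pit h (i + 1) a = pit h' i l := fun i hi => by
      rw [pit_succ_of_eq_some ha]
      exact pit_eq_of_subheap hle (pit_ne_none_of_le hi (by simp [hk]))
    have hfresh : ∀ i ≤ k, pit h (i + 1) a ≠ some a := by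
      intro i hi hia
      rw [hshift i hi] at hia
      rcases hi.lt_or_eq with hik | rfl
      · exact (hdom' a).mpr ⟨i, hik, hia⟩ ha'
      · exact hab (Option.some_injective _ (hia.symm.trans hk))
    refine ⟨k + 1, by rw [hshift k le_rfl, hk], ?_, fun c => ?_⟩
    · rintro (_ | i) hi (_ | j) hj hij
      · rfl
      · exact absurd hij.symm (hfresh j (Nat.le_of_succ_le_succ hj))
      · exact absurd hij (hfresh i (Nat.le_of_succ_le_succ hi))
      · have hi := Nat.le_of_succ_le_succ hi
        have hj := Nat.le_of_succ_le_succ hj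
        exact congrArg (· + 1) (hinj hi hj ((hshift i hi).symm.trans (hij.trans (hshift j hj))))
    · rw [mem_hdom_iff_eq_or_mem_hdom ha hrest, hdom', Nat.exists_lt_succ_left]
      refine or_congr (by simp [pit, eq_comm]) (exists_congr fun i => and_congr_right fun hik => ?_)
      rw [hshift i hik.le]

theorem Sls.right_notMem_hdom {h : Loc → Option Loc} {a b : Loc} (hs : Sls h a b) :
    b ∉ hdom h := by
  obtain ⟨k, hk, hinj, hdom_iff⟩ := hs.exists_pit_injOn
  rintro hb
  obtain ⟨i, hik, hi⟩ := (hdom_iff b).mp hb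
  exact hik.ne (hinj hik.le Set.self_mem_Iic (hi.trans hk.symm))

theorem Sls.exists_pit_injOn_of_mem_hdom {h : Loc → Option Loc} {a b l : Loc} (hs : Sls h a b)
    (hl : l ∈ hdom h) : ∃ k, pit h k l = some b ∧ Set.InjOn (pit h · l) (Set.Iic k) := by
  obtain ⟨k, hk, hinj, hdom_iff⟩ := hs.exists_pit_injOn
  obtain ⟨i, hik, hi⟩ := (hdom_iff l).mp hl
  have hshift : ∀ j, pit h j l = pit h (i + j) a := fun j => by rw [pit_add, hi]; rfl
  refine ⟨k - i, by rw [hshift, Nat.add_sub_cancel' hik.le, hk], fun j₁ hj₁ j₂ hj₂ hj => ?_⟩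
  have := hinj (show i + j₁ ≤ k by grind) (show i + j₂ ≤ k by grind)
    ((hshift j₁).symm.trans (hj.trans (hshift j₂)))
  omega

theorem stmt15_general (s : Vars → Loc) (x y : Vars) (h : Loc → Option Loc)
    (hsls : Sls h (s x) (s y)) :
    s y ∉ hdom h ∧
    ∀ l ∈ hdom h, ∃ k, pit h k l = some (s y) ∧
      ∀ i j, i ≤ k → j ≤ k → i ≠ j → pit h i l ≠ pit h j l := by
  refine ⟨hsls.right_notMem_hdom, fun l hl => ?_⟩
  obtain ⟨k, hk, hinj⟩ := hsls.exists_pit_injOn_of_mem_hdom hl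
  exact ⟨k, hk, fun i j hi hj => mt (hinj hi hj)⟩

/-- Acyclicity of list segments: the sink is not allocated, and from every
allocated location the iterates of `h` reach the sink without repetition. -/
theorem stmt15 (s : Vars → Loc) (x y : Vars) (h : Loc → Option Loc)
    (hsls : Sls h (s x) (s y)) (hxy : s x ≠ s y) :
    s y ∉ hdom h ∧
    ∀ l ∈ hdom h, ∃ k, pit h k l = some (s y) ∧
      ∀ i j, i ≤ k → j ≤ k → i ≠ j → pit h i l ≠ pit h j l :=
  stmt15_general s x y h hsls

end
end

section
/- The length of a list segment equals the size of the heap: if (s,h) ⊨ sls(x,y), then h^{|dom(h)|}(s(x)) = s(y), where h^k denotes k-fold iteration of the heap partial function, and moreover h^i(s(x)) ≠ s(y) for all i < |dom(h)|. -/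
/-!
Induction on the segment. Unfolding the first cell `a ↦ l` removes one location from the
domain and one step from the walk. Every point the tail's walk visits before its end lies in
the tail's domain, so it avoids `a`, and the two heaps therefore give the same iterates. The
sink is outside the domain while every earlier point of the walk is inside, so the walk
cannot reach the sink early.
-/

section

variable {Vars Loc : Type*}

theorem pit_congr {h h' : Loc → Option Loc} {n : ℕ} {x : Loc}
    (hagree : ∀ j < n, ∀ v ∈ pit h' j x, h v = h' v) : pit h n x = pit h' n x := by
  induction n generalizing x with
  | zero => rfl
  | succ n ih =>
    have hx : h x = h' x := hagree 0 n.succ_pos x rfl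
    cases hy : h' x with
    | none => simp [pit, hx, hy]
    | some y =>
      simp only [pit, hx, hy, Option.bind_some]
      refine ih fun j hj v hv => hagree (j + 1) (Nat.succ_lt_succ hj) v ?_
      simpa [pit, hy] using hv

theorem pit_eq_of_walk_mem_hdom {h h' : Loc → Option Loc} {a x : Loc} {n : ℕ}
    (ha' : h' a = none) (hrest : ∀ m, m ≠ a → h m = h' m)
    (hwalk : ∀ j < n, ∃ v ∈ hdom h', pit h' j x = some v) : pit h n x = pit h' n x := by
  refine pit_congr fun j hj v hv => hrest v ?_
  rintro rfl
  obtain ⟨w, hw, hpit⟩ := hwalk j hj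
  obtain rfl : v = w := Option.some.inj (hv.symm.trans hpit)
  exact hw ha'

theorem hdom_eq_insert {h h' : Loc → Option Loc} {a l : Loc} (ha : h a = some l)
    (hrest : ∀ m, m ≠ a → h m = h' m) : hdom h = insert a (hdom h') := by
  ext m
  by_cases hm : m = a
  · subst hm; simp [hdom, ha]
  · simp [hdom, hrest m hm, hm]

theorem ncard_hdom_eq_succ {h h' : Loc → Option Loc} {a l : Loc} (ha : h a = some l)
    (ha' : h' a = none) (hrest : ∀ m, m ≠ a → h m = h' m) (hfin : (hdom h').Finite) :
    (hdom h).ncard = (hdom h').ncard + 1 := by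
  rw [hdom_eq_insert ha hrest, Set.ncard_insert_of_notMem (by simp [hdom, ha']) hfin]

namespace Sls

variable {h : Loc → Option Loc} {a b : Loc}

theorem sink_eq_none (hsls : Sls h a b) : h b = none := by
  induction hsls with
  | nil h a he => exact he a
  | cons h h' a b l hab _ _ hrest _ ih => rwa [hrest b (Ne.symm hab)]

theorem hdom_finite (hsls : Sls h a b) : (hdom h).Finite := by
  induction hsls with
  | nil h a he => simp [hdom, he]
  | cons h h' a b l _ ha _ hrest _ ih => rw [hdom_eq_insert ha hrest]; exact ih.insert a

theorem exists_pit_mem_hdom (hsls : Sls h a b) :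
    ∀ i < (hdom h).ncard, ∃ v ∈ hdom h, pit h i a = some v := by
  induction hsls with
  | nil h a he => simp [hdom, he]
  | cons h h' a b l _ ha ha' hrest tail ih =>
    rw [ncard_hdom_eq_succ ha ha' hrest tail.hdom_finite]
    rintro (_ | j) hj
    · exact ⟨a, by simp [hdom, ha], rfl⟩
    · obtain ⟨v, hv, hpit⟩ := ih j (by omega)
      refine ⟨v, hdom_eq_insert ha hrest ▸ Set.mem_insert_of_mem a hv, ?_⟩
      simp only [pit, ha, Option.bind_some]
      rw [pit_eq_of_walk_mem_hdom ha' hrest fun k hk => ih k (by omega), hpit]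

theorem pit_ncard_hdom (hsls : Sls h a b) : pit h (hdom h).ncard a = some b := by
  induction hsls with
  | nil h a he => simp [hdom, he, pit]
  | cons h h' a b l _ ha ha' hrest tail ih =>
    rw [ncard_hdom_eq_succ ha ha' hrest tail.hdom_finite]
    simp only [pit, ha, Option.bind_some]
    rw [pit_eq_of_walk_mem_hdom ha' hrest tail.exists_pit_mem_hdom, ih]

end Sls

/-- The length of a list segment equals the size of the heap: iterating `h`
exactly `|dom h|` times from the root reaches the sink, and never earlier. -/
theorem stmt16 (s : Vars → Loc) (x y : Vars) (h : Loc → Option Loc)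
    (hsls : Sls h (s x) (s y)) :
    pit h ((hdom h).ncard) (s x) = some (s y) ∧
    ∀ i < (hdom h).ncard, pit h i (s x) ≠ some (s y) := by
  refine ⟨hsls.pit_ncard_hdom, fun i hi hreach => ?_⟩
  obtain ⟨v, hv, hpit⟩ := hsls.exists_pit_mem_hdom i hi
  obtain rfl : v = s y := Option.some.inj (hpit.symm.trans hreach)
  exact hv hsls.sink_eq_none

end
end

section
/- Composition of list segments at an unallocated, non-sink-reaching point yields a list segment: if (s,h1) ⊨ sls(x,p), (s,h2) ⊨ sls(p,y), h1 and h2 are disjoint, and s(y) ∉ dom(h1), then (s, h1 ⊎ h2) ⊨ sls(x,y). -/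
/-!
Induction on the first segment. An empty first segment leaves `h2` itself. A first segment
`x ↦ l` followed by a segment from `l` composes by induction with the second one; the cell at
`x` survives in the union because `h2` does not allocate it (disjointness), and `x ≠ y`
because `x` is allocated in `h1` while `y` is not.
-/

section

variable {Vars Loc : Type*}

theorem hunion_apply_of_eq_none {h1 : Loc → Option Loc} {l : Loc} (hl : h1 l = none)
    (h2 : Loc → Option Loc) : hunion h1 h2 l = h2 l := by
  simp [hunion, hl]

theorem hunion_apply_of_eq_some {h1 : Loc → Option Loc} {l v : Loc} (hl : h1 l = some v)
    (h2 : Loc → Option Loc) : hunion h1 h2 l = some v := by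
  simp [hunion, hl]

theorem hunion_of_forall_eq_none {h1 : Loc → Option Loc} (he : ∀ l, h1 l = none)
    (h2 : Loc → Option Loc) : hunion h1 h2 = h2 :=
  funext fun l => hunion_apply_of_eq_none (he l) h2

theorem hunion_apply_congr {h1 h1' : Loc → Option Loc} {l : Loc} (hl : h1 l = h1' l)
    (h2 : Loc → Option Loc) : hunion h1 h2 l = hunion h1' h2 l := by
  simp [hunion, hl]

theorem eq_none_of_mem_hdom_of_hDisj {h1 h2 : Loc → Option Loc} (hdisj : HDisj h1 h2)
    {l : Loc} (hl : l ∈ hdom h1) : h2 l = none :=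
  not_not.mp (Set.disjoint_left.mp hdisj hl)

theorem HDisj.mono_left {h1 h1' h2 : Loc → Option Loc} (hsub : hdom h1' ⊆ hdom h1)
    (hdisj : HDisj h1 h2) : HDisj h1' h2 :=
  Set.disjoint_of_subset_left hsub hdisj

theorem hdom_subset_of_eq_off {h h' : Loc → Option Loc} {a : Loc} (ha' : h' a = none)
    (hrest : ∀ m, m ≠ a → h m = h' m) : hdom h' ⊆ hdom h := by
  intro m hm
  have hma : m ≠ a := by rintro rfl; exact hm ha'
  simpa [hdom, hrest m hma] using hm

theorem Sls.append {h1 h2 : Loc → Option Loc} {a b c : Loc}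
    (H1 : Sls h1 a b) (H2 : Sls h2 b c) (hdisj : HDisj h1 h2) (hc : c ∉ hdom h1) :
    Sls (hunion h1 h2) a c := by
  induction H1 with
  | nil h a he => rwa [hunion_of_forall_eq_none he]
  | cons h h' a b l hab ha ha' hrest tail ih =>
    have hadom : a ∈ hdom h := by simp [hdom, ha]
    have hsub : hdom h' ⊆ hdom h := hdom_subset_of_eq_off ha' hrest
    refine .cons _ (hunion h' h2) a c l (fun hac => hc (hac ▸ hadom))
      (hunion_apply_of_eq_some ha h2) ?_ (fun m hma => hunion_apply_congr (hrest m hma) h2)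
      (ih H2 (hdisj.mono_left hsub) (fun hc' => hc (hsub hc')))
    rw [hunion_apply_of_eq_none ha']
    exact eq_none_of_mem_hdom_of_hDisj hdisj hadom

/-- Composition of list segments at an unallocated, non-sink-reaching point
yields a list segment. -/
theorem stmt17 (s : Vars → Loc) (x p y : Vars) (h1 h2 : Loc → Option Loc)
    (h1sls : Sls h1 (s x) (s p)) (h2sls : Sls h2 (s p) (s y))
    (hdisj : HDisj h1 h2) (hy : s y ∉ hdom h1) :
    Sls (hunion h1 h2) (s x) (s y) :=
  h1sls.append h2sls hdisj hy

end
end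

section
/- QBF-style encoding of arbitrary valuations: for a finite set of variables X and stack s injective on X with nil ∉ s(X), a heap h satisfies (s,h) ⊨ ⊛_{x ∈ X} (x ↦ nil ∨ emp) if and only if dom(h) ⊆ s(X) and h(ℓ) = s(nil) for every ℓ ∈ dom(h). -/
/-!
Each conjunct `x ↦ nil ∨ emp` says that its heap is a subheap of the one-cell heap
`s x ↦ s nil`. Separating conjunction of subheaps of `S ↦ v` and of `T ↦ v` gives exactly the
subheaps of `S ∪ T ↦ v`: one direction is immediate, and conversely a subheap of `S ∪ T ↦ v`
splits into its restrictions to `S` and to the complement of `S`. Overlaps between the regions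
are harmless, since a conjunct may claim any part of its own region, so by induction the
iterated conjunction describes the subheaps of `s(X) ↦ s nil`.
-/

section

open Classical

variable {Vars Loc : Type*}

/-- Semantics of the iterated separating conjunction `⊛_{x ∈ L} P x`
(with `emp` for the empty list). -/
def IterStar (P : Vars → (Loc → Option Loc) → Prop) :
    List Vars → (Loc → Option Loc) → Prop
  | [], h => hdom h = ∅
  | x :: xs, h => ∃ h1 h2, HDisj h1 h2 ∧ h = hunion h1 h2 ∧
      P x h1 ∧ IterStar P xs h2

/-- Semantics of `x ↦ nil ∨ emp` under stack `s` with distinguished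
variable `nilv`. -/
noncomputable def PtoNilOrEmp (s : Vars → Loc) (nilv : Vars) (x : Vars)
    (h : Loc → Option Loc) : Prop :=
  (h = fun m => if m = s x then some (s nilv) else none) ∨ hdom h = ∅

/-- `h` is a subheap of the heap mapping every location of `S` to `v`. -/
def ConstHeapWithin (S : Set Loc) (v : Loc) (h : Loc → Option Loc) : Prop :=
  hdom h ⊆ S ∧ ∀ l ∈ hdom h, h l = some v

theorem constHeapWithin_empty_iff {v : Loc} {h : Loc → Option Loc} :
    ConstHeapWithin ∅ v h ↔ hdom h = ∅ := by
  simp +contextual [ConstHeapWithin, Set.subset_empty_iff]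

theorem ConstHeapWithin.union {S T : Set Loc} {v : Loc} {h₁ h₂ : Loc → Option Loc}
    (h₁S : ConstHeapWithin S v h₁) (h₂T : ConstHeapWithin T v h₂) :
    ConstHeapWithin (S ∪ T) v (hunion h₁ h₂) := by
  constructor <;> intro l hl <;> rcases e : h₁ l with _ | a
  · simp only [hdom, hunion, e, Set.mem_ofPred_eq] at hl
    exact Or.inr (h₂T.1 hl)
  · exact Or.inl (h₁S.1 (by simp [hdom, e]))
  · simp only [hdom, hunion, e, Set.mem_ofPred_eq] at hl ⊢
    exact h₂T.2 l hl
  · simpa [hunion, e] using h₁S.2 l (by simp [hdom, e])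

theorem ConstHeapWithin.exists_split {S T : Set Loc} {v : Loc} {h : Loc → Option Loc}
    (hST : ConstHeapWithin (S ∪ T) v h) :
    ∃ h₁ h₂, HDisj h₁ h₂ ∧ h = hunion h₁ h₂ ∧
      ConstHeapWithin S v h₁ ∧ ConstHeapWithin T v h₂ := by
  refine ⟨fun l => if l ∈ S then h l else none, fun l => if l ∈ S then none else h l,
    ?_, ?_, ⟨?_, ?_⟩, ⟨?_, ?_⟩⟩
  · rw [HDisj, Set.disjoint_left]
    intro l hl₁ hl₂
    by_cases hS : l ∈ S <;> simp_all [hdom]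
  · funext l
    by_cases hS : l ∈ S <;> simp [hunion, hS]
  all_goals
    intro l hl
    have hval := hST.2 l
    have hsub : l ∈ hdom h → l ∈ S ∨ l ∈ T := fun hl => hST.1 hl
    by_cases hS : l ∈ S <;> simp_all [hdom]

theorem iterStar_iff_constHeapWithin {P : Vars → (Loc → Option Loc) → Prop}
    {A : Vars → Set Loc} {v : Loc} (hP : ∀ x h, P x h ↔ ConstHeapWithin (A x) v h)
    (L : List Vars) (h : Loc → Option Loc) :
    IterStar P L h ↔ ConstHeapWithin (⋃ x ∈ L, A x) v h := by
  induction L generalizing h with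
  | nil => simp [IterStar, constHeapWithin_empty_iff]
  | cons x xs ih =>
    have hcons : (⋃ y ∈ x :: xs, A y) = A x ∪ ⋃ y ∈ xs, A y := by
      simp only [List.mem_cons, Set.iUnion_iUnion_eq_or_left]
    simp only [IterStar, hP, ih, hcons]
    constructor
    · rintro ⟨h₁, h₂, -, rfl, h₁A, h₂A⟩
      exact h₁A.union h₂A
    · exact ConstHeapWithin.exists_split

theorem ptoNilOrEmp_iff (s : Vars → Loc) (nilv x : Vars) (h : Loc → Option Loc) :
    PtoNilOrEmp s nilv x h ↔ ConstHeapWithin {s x} (s nilv) h := by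
  constructor
  · rintro (rfl | hemp)
    · constructor <;> intro l hl <;> by_cases e : l = s x <;> simp_all [hdom]
    · simp [ConstHeapWithin, hemp]
  · rintro ⟨hsub, hval⟩
    by_cases hx : h (s x) = none
    · refine Or.inr (Set.eq_empty_of_forall_notMem fun l hl => ?_)
      exact hl (hsub hl ▸ hx)
    · refine Or.inl (funext fun l => ?_)
      by_cases e : l = s x
      · subst e; simpa using hval _ hx
      · simpa [e, hdom] using fun hl => e (hsub hl)

theorem stmt19_general (s : Vars → Loc) (nilv : Vars) (X : Finset Vars)
    (h : Loc → Option Loc) :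
    IterStar (PtoNilOrEmp s nilv) X.toList h ↔
      hdom h ⊆ s '' (X : Set Vars) ∧ ∀ l ∈ hdom h, h l = some (s nilv) := by
  have himage : (⋃ x ∈ X.toList, ({s x} : Set Loc)) = s '' (X : Set Vars) := by
    ext; simp [eq_comm]
  rw [iterStar_iff_constHeapWithin (ptoNilOrEmp_iff s nilv), himage]
  rfl

/-- QBF-style encoding of arbitrary valuations: for a finite set `X` of
variables on which `s` is injective and whose stack image avoids `s nil`,
a heap satisfies `⊛_{x ∈ X} (x ↦ nil ∨ emp)` iff its domain is contained in
`s '' X` and every allocated location points to `s nil`. -/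
theorem stmt19 (s : Vars → Loc) (nilv : Vars) (X : Finset Vars)
    (hinj : Set.InjOn s X) (hnil : s nilv ∉ s '' (X : Set Vars))
    (h : Loc → Option Loc) :
    IterStar (PtoNilOrEmp s nilv) X.toList h ↔
      hdom h ⊆ s '' (X : Set Vars) ∧ ∀ l ∈ hdom h, h l = some (s nilv) :=
  stmt19_general s nilv X h

end
end
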